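/- arXiv:1506.02632 — 3 statements merged into one kernel-verified Lean document; each statement's English description precedes it below -/
import Mathlib

section
/- Let Y be a nonnegative real-valued random variable and let w : [0,1] → [0,1] be Hölder continuous of order α ∈ (0,1] with constant H, nondecreasing, with w(0) = 0 and w(1) = 1. Suppose there exists γ with 0 < γ ≤ α such that ∫₀^∞ P(Y > z)^γ dz < ∞. For p ∈ (0,1), let ξ_p denote the p-th quantile of Y (i.e., ξ_p = inf{t : P(Y ≤ t) ≥ p}). Then the quantile sums converge: lim_{n→∞} Σ_{i=1}^{n−1} ξ_{i/n} · ( w((n−i)/n) − w((n−i−1)/n) ) = ∫₀^∞ w(P(Y > z)) dz, and this limit is finite. -/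
/-!
Write `F` for the distribution function of `Y`. For `0 < p < 1` the quantile `ξ p` is the length
of `{z > 0 | F z < p}`, so the `n`-th quantile sum is the integral over `z > 0` of a step function
of `F z`. The step function telescopes to `w x` at the grid point `x = k / n` just below
`P(Y > z) = 1 - F z`; it therefore lies between `0` and `w (P(Y > z))` and, by Hölder continuity,
converges to it. Since `w x ≤ H x ^ γ`, the tail hypothesis makes `w (P(Y > ·))` integrable, and
dominated convergence concludes.
-/

open MeasureTheory Filter Set Topology

section Weight

variable {w : ℝ → ℝ} {α H : ℝ}

lemma abs_le_mul_rpow_of_holder {γ x : ℝ} (hH : 0 ≤ H) (hγ0 : 0 ≤ γ) (hγα : γ ≤ α)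
    (hw_holder : ∀ x ∈ Icc (0:ℝ) 1, ∀ y ∈ Icc (0:ℝ) 1, |w x - w y| ≤ H * |x - y| ^ α)
    (hw0 : w 0 = 0) (hx : x ∈ Icc (0:ℝ) 1) :
    |w x| ≤ H * x ^ γ :=
  calc |w x| = |w x - w 0| := by rw [hw0, sub_zero]
    _ ≤ H * |x - 0| ^ α := hw_holder x hx 0 (left_mem_Icc.2 zero_le_one)
    _ = H * x ^ α := by rw [sub_zero, abs_of_nonneg hx.1]
    _ ≤ H * x ^ γ :=
      mul_le_mul_of_nonneg_left (Real.rpow_le_rpow_of_exponent_ge' hx.1 hx.2 hγ0 hγα) hH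

lemma integrableOn_comp_of_lintegral_rpow_lt_top {g : ℝ → ℝ} {s : Set ℝ} {γ : ℝ}
    (hg : Antitone g) (hg_mem : ∀ z, g z ∈ Icc (0:ℝ) 1) (hH : 0 ≤ H) (hγ0 : 0 ≤ γ) (hγα : γ ≤ α)
    (hw_mono : MonotoneOn w (Icc 0 1))
    (hw_holder : ∀ x ∈ Icc (0:ℝ) 1, ∀ y ∈ Icc (0:ℝ) 1, |w x - w y| ≤ H * |x - y| ^ α)
    (hw0 : w 0 = 0) (hint : ∫⁻ z in s, ENNReal.ofReal (g z ^ γ) < ⊤) :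
    IntegrableOn (fun z => w (g z)) s := by
  have hwg : Antitone fun z => w (g z) := fun a b hab => hw_mono (hg_mem b) (hg_mem a) (hg hab)
  have hgγ : IntegrableOn (fun z => g z ^ γ) s :=
    ⟨(hg.measurable.pow_const γ).aestronglyMeasurable,
      (hasFiniteIntegral_iff_ofReal (ae_of_all _ fun z => Real.rpow_nonneg (hg_mem z).1 γ)).2 hint⟩
  exact (hgγ.const_mul H).mono' hwg.measurable.aestronglyMeasurable <| ae_of_all _ fun z =>
    abs_le_mul_rpow_of_holder hH hγ0 hγα hw_holder hw0 (hg_mem z)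

noncomputable def stepWeight (w : ℝ → ℝ) (n : ℕ) (t : ℝ) : ℝ :=
  ∑ i ∈ Finset.Icc 1 (n - 1),
    if t < (i : ℝ) / n then w (((n : ℝ) - i) / n) - w (((n : ℝ) - i - 1) / n) else 0

-- For `t ∈ [0, 1]`: the largest of `0, 1/n, …, 1` strictly below `1 - t`, or `0` if there is none.
noncomputable def gridBelow (n : ℕ) (t : ℝ) : ℝ :=
  ((n - (⌊n * t⌋₊ + 1) : ℕ) : ℝ) / n

lemma gridBelow_nonneg (n : ℕ) (t : ℝ) : 0 ≤ gridBelow n t :=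
  div_nonneg (Nat.cast_nonneg _) (Nat.cast_nonneg _)

lemma one_sub_mem_Icc_gridBelow {n : ℕ} (hn : 0 < n) {t : ℝ} (ht : t ∈ Icc (0:ℝ) 1) :
    1 - t ∈ Icc (gridBelow n t) (gridBelow n t + 1 / n) := by
  have hn' : (0 : ℝ) < n := Nat.cast_pos.2 hn
  have hfloor := Nat.floor_le (mul_nonneg hn'.le ht.1)
  have hlt := Nat.lt_floor_add_one ((n : ℝ) * t)
  rw [gridBelow, mem_Icc, ← add_div, div_le_iff₀ hn', le_div_iff₀ hn']
  rcases le_or_gt (⌊n * t⌋₊ + 1) n with hm | hm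
  · rw [Nat.cast_sub hm]; push_cast
    constructor <;> nlinarith
  · have ht1 : t = 1 := by
      refine le_antisymm ht.2 ?_
      have : (n : ℝ) ≤ ⌊n * t⌋₊ := by exact_mod_cast Nat.le_of_lt_succ hm
      nlinarith
    subst ht1
    rw [Nat.sub_eq_zero_of_le hm.le]; simp

lemma stepWeight_zero (t : ℝ) : stepWeight w 0 t = 0 := by
  simp [stepWeight]

lemma measurable_stepWeight (n : ℕ) : Measurable (stepWeight w n) :=
  Finset.measurable_sum _ fun _ _ =>
    Measurable.ite measurableSet_Iio measurable_const measurable_const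

lemma stepWeight_eq_gridBelow {n : ℕ} (hn : 0 < n) {t : ℝ} (ht : 0 ≤ t) (hw0 : w 0 = 0) :
    stepWeight w n t = w (gridBelow n t) := by
  set m := ⌊n * t⌋₊ + 1
  set v : ℕ → ℝ := fun i => w (((n - i : ℕ) : ℝ) / n)
  have hn' : (0 : ℝ) < n := Nat.cast_pos.2 hn
  have hcond : ∀ i : ℕ, t < (i : ℝ) / n ↔ m ≤ i := fun i => by
    rw [lt_div_iff₀ hn', mul_comm, ← Nat.floor_lt (by positivity), Nat.add_one_le_iff]
  have hfilter :
      (Finset.Icc 1 (n - 1)).filter (fun i : ℕ => t < (i : ℝ) / n) = Finset.Ico m n := by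
    ext i; simp only [Finset.mem_filter, Finset.mem_Icc, Finset.mem_Ico, hcond]; omega
  have hterm : ∀ i ∈ Finset.Ico m n,
      w (((n : ℝ) - i) / n) - w (((n : ℝ) - i - 1) / n) = v i - v (i + 1) := fun i hi => by
    have hin : i + 1 ≤ n := (Finset.mem_Ico.1 hi).2
    simp only [v, Nat.cast_sub hin, Nat.cast_sub (Nat.le_of_succ_le hin)]
    push_cast; ring_nf
  rw [stepWeight, ← Finset.sum_filter, hfilter, Finset.sum_congr rfl hterm, gridBelow]
  rcases le_total m n with hmn | hnm
  · have htel := Finset.sum_Ico_sub v hmn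
    rw [Finset.sum_sub_distrib] at htel ⊢
    simp only [v, Nat.sub_self, Nat.cast_zero, zero_div, hw0] at htel ⊢
    linarith
  · rw [Finset.Ico_eq_empty_of_le hnm, Finset.sum_empty, Nat.sub_eq_zero_of_le hnm,
      Nat.cast_zero, zero_div, hw0]

lemma stepWeight_mem_Icc (hw_mono : MonotoneOn w (Icc 0 1)) (hw0 : w 0 = 0) (n : ℕ) {t : ℝ}
    (ht : t ∈ Icc (0:ℝ) 1) : stepWeight w n t ∈ Icc 0 (w (1 - t)) := by
  have hs : 1 - t ∈ Icc (0:ℝ) 1 := ⟨by linarith [ht.2], by linarith [ht.1]⟩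
  have hw_nonneg : ∀ x ∈ Icc (0:ℝ) 1, 0 ≤ w x := fun x hx =>
    hw0 ▸ hw_mono (left_mem_Icc.2 zero_le_one) hx hx.1
  rcases Nat.eq_zero_or_pos n with rfl | hn
  · rw [stepWeight_zero]; exact ⟨le_rfl, hw_nonneg _ hs⟩
  have hle := (one_sub_mem_Icc_gridBelow hn ht).1
  have hx : gridBelow n t ∈ Icc (0:ℝ) 1 := ⟨gridBelow_nonneg n t, hle.trans hs.2⟩
  rw [stepWeight_eq_gridBelow hn ht.1 hw0]
  exact ⟨hw_nonneg _ hx, hw_mono hx hs hle⟩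

lemma sub_stepWeight_le (hα : 0 ≤ α) (hH : 0 ≤ H)
    (hw_holder : ∀ x ∈ Icc (0:ℝ) 1, ∀ y ∈ Icc (0:ℝ) 1, |w x - w y| ≤ H * |x - y| ^ α)
    (hw0 : w 0 = 0) {n : ℕ} (hn : 0 < n) {t : ℝ} (ht : t ∈ Icc (0:ℝ) 1) :
    w (1 - t) - stepWeight w n t ≤ H * (1 / n) ^ α := by
  obtain ⟨hle, hge⟩ := one_sub_mem_Icc_gridBelow hn ht
  have hs : 1 - t ∈ Icc (0:ℝ) 1 := ⟨by linarith [ht.2], by linarith [ht.1]⟩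
  have hx : gridBelow n t ∈ Icc (0:ℝ) 1 := ⟨gridBelow_nonneg n t, hle.trans hs.2⟩
  rw [stepWeight_eq_gridBelow hn ht.1 hw0]
  calc w (1 - t) - w (gridBelow n t) ≤ |w (1 - t) - w (gridBelow n t)| := le_abs_self _
    _ ≤ H * |1 - t - gridBelow n t| ^ α := hw_holder _ hs _ hx
    _ ≤ H * (1 / n) ^ α := by
      refine mul_le_mul_of_nonneg_left (Real.rpow_le_rpow (abs_nonneg _) ?_ hα) hH
      rw [abs_of_nonneg (sub_nonneg.2 hle)]; linarith

lemma tendsto_stepWeight (hα : 0 < α) (hH : 0 ≤ H) (hw_mono : MonotoneOn w (Icc 0 1))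
    (hw_holder : ∀ x ∈ Icc (0:ℝ) 1, ∀ y ∈ Icc (0:ℝ) 1, |w x - w y| ≤ H * |x - y| ^ α)
    (hw0 : w 0 = 0) {t : ℝ} (ht : t ∈ Icc (0:ℝ) 1) :
    Tendsto (fun n => stepWeight w n t) atTop (𝓝 (w (1 - t))) := by
  have hgap : Tendsto (fun n : ℕ => H * (1 / (n : ℝ)) ^ α) atTop (𝓝 0) := by
    simpa [Real.zero_rpow hα.ne'] using
      (tendsto_one_div_atTop_nhds_zero_nat.rpow_const (Or.inr hα.le)).const_mul H
  refine tendsto_of_tendsto_of_tendsto_of_le_of_le'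
    (sub_zero (w (1 - t)) ▸ tendsto_const_nhds.sub hgap)
    tendsto_const_nhds ?_ (Eventually.of_forall fun n => (stepWeight_mem_Icc hw_mono hw0 n ht).2)
  filter_upwards [eventually_gt_atTop 0] with n hn
  linarith [sub_stepWeight_le hα.le hH hw_holder hw0 hn ht]

end Weight

section Quantile

variable {F : ℝ → ℝ} {p : ℝ}

lemma volume_setOf_lt_inter_Ioi (hF : Monotone F) (hne : ∃ t, p ≤ F t)
    (hpos : ∀ t, p ≤ F t → 0 ≤ t) :
    volume ({z | F z < p} ∩ Ioi 0) = ENNReal.ofReal (sInf {t | p ≤ F t}) := by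
  set q := sInf {t | p ≤ F t}
  have hlt : ∀ z, z < q → F z < p := fun z hz =>
    not_le.1 fun h => hz.not_ge (csInf_le ⟨0, hpos⟩ h)
  have hle : ∀ z, F z < p → z ≤ q := fun z hz =>
    le_csInf hne fun t ht => le_of_not_gt fun htz => hz.not_ge (ht.trans (hF htz.le))
  apply le_antisymm
  · calc volume ({z | F z < p} ∩ Ioi 0) ≤ volume (Ioc 0 q) :=
          measure_mono fun z hz => ⟨hz.2, hle z hz.1⟩
      _ = ENNReal.ofReal q := by rw [Real.volume_Ioc, sub_zero]
  · calc ENNReal.ofReal q = volume (Ioo 0 q) := by rw [Real.volume_Ioo, sub_zero]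
      _ ≤ volume ({z | F z < p} ∩ Ioi 0) := measure_mono fun z hz => ⟨hlt z hz.2, hz.1⟩

lemma integrable_indicator_setOf_lt (hF : Monotone F) (hne : ∃ t, p ≤ F t)
    (hpos : ∀ t, p ≤ F t → 0 ≤ t) (c : ℝ) :
    Integrable ({z | F z < p}.indicator fun _ => c) (volume.restrict (Ioi 0)) := by
  have hmeas : MeasurableSet {z | F z < p} := measurableSet_lt hF.measurable measurable_const
  refine (integrable_indicator_iff hmeas).2 (integrableOn_const ?_)
  rw [Measure.restrict_apply hmeas, volume_setOf_lt_inter_Ioi hF hne hpos]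
  exact ENNReal.ofReal_ne_top

lemma integral_indicator_setOf_lt (hF : Monotone F) (hne : ∃ t, p ≤ F t)
    (hpos : ∀ t, p ≤ F t → 0 ≤ t) (c : ℝ) :
    ∫ z in Ioi 0, {z | F z < p}.indicator (fun _ => c) z = sInf {t | p ≤ F t} * c := by
  have hmeas : MeasurableSet {z | F z < p} := measurableSet_lt hF.measurable measurable_const
  rw [integral_indicator_const _ hmeas, measureReal_def, Measure.restrict_apply hmeas,
    volume_setOf_lt_inter_Ioi hF hne hpos,
    ENNReal.toReal_ofReal (le_csInf hne hpos : 0 ≤ sInf {t | p ≤ F t}), smul_eq_mul]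

lemma div_mem_Ioo_of_mem_Icc {i n : ℕ} (hi : i ∈ Finset.Icc 1 (n - 1)) :
    (i : ℝ) / n ∈ Ioo (0:ℝ) 1 := by
  obtain ⟨hi1, hin⟩ := Finset.mem_Icc.1 hi
  have hn : (0 : ℝ) < n := by exact_mod_cast (by omega : 0 < n)
  exact ⟨div_pos (by exact_mod_cast hi1) hn,
    (div_lt_one hn).2 (by exact_mod_cast (by omega : i < n))⟩

lemma integral_stepWeight_comp (hF : Monotone F) (hF_neg : ∀ t < 0, F t = 0)
    (hF_top : ∀ p < 1, ∃ t, p ≤ F t) {ξ : ℝ → ℝ}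
    (hξ : ∀ p ∈ Ioo (0:ℝ) 1, ξ p = sInf {t | p ≤ F t}) (w : ℝ → ℝ) (n : ℕ) :
    ∫ z in Ioi 0, stepWeight w n (F z) = ∑ i ∈ Finset.Icc 1 (n - 1),
      ξ ((i : ℝ) / n) * (w (((n : ℝ) - i) / n) - w (((n : ℝ) - i - 1) / n)) := by
  have hgrid : ∀ i ∈ Finset.Icc 1 (n - 1),
      (∃ t, (i : ℝ) / n ≤ F t) ∧ ∀ t, (i : ℝ) / n ≤ F t → 0 ≤ t := fun i hi => by
    obtain ⟨hpos, hlt⟩ := div_mem_Ioo_of_mem_Icc hi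
    refine ⟨hF_top _ hlt, fun t ht => le_of_not_gt fun htneg => ?_⟩
    linarith [hF_neg t htneg]
  have hind : ∀ p c z : ℝ,
      (if F z < p then c else 0) = {z | F z < p}.indicator (fun _ => c) z :=
    fun p c z => by simp [Set.indicator_apply]
  simp only [stepWeight, hind]
  rw [integral_finsetSum _ fun i hi =>
    integrable_indicator_setOf_lt hF (hgrid i hi).1 (hgrid i hi).2 _]
  refine Finset.sum_congr rfl fun i hi => ?_
  rw [integral_indicator_setOf_lt hF (hgrid i hi).1 (hgrid i hi).2,
    hξ _ (div_mem_Ioo_of_mem_Icc hi)]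

end Quantile

theorem tendsto_sum_quantile_mul_weight_sub {F : ℝ → ℝ} (hF : Monotone F)
    (hF_neg : ∀ t < 0, F t = 0) (hF_le : ∀ t, F t ≤ 1) (hF_top : ∀ p < 1, ∃ t, p ≤ F t)
    {w : ℝ → ℝ} {α H : ℝ} (hα : 0 < α) (hH : 0 ≤ H) (hw_mono : MonotoneOn w (Icc 0 1))
    (hw_holder : ∀ x ∈ Icc (0:ℝ) 1, ∀ y ∈ Icc (0:ℝ) 1, |w x - w y| ≤ H * |x - y| ^ α)
    (hw0 : w 0 = 0) (hint : IntegrableOn (fun z => w (1 - F z)) (Ioi 0))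
    {ξ : ℝ → ℝ} (hξ : ∀ p ∈ Ioo (0:ℝ) 1, ξ p = sInf {t | p ≤ F t}) :
    Tendsto (fun n : ℕ => ∑ i ∈ Finset.Icc 1 (n - 1),
        ξ ((i : ℝ) / n) * (w (((n : ℝ) - i) / n) - w (((n : ℝ) - i - 1) / n)))
      atTop (𝓝 (∫ z in Ioi 0, w (1 - F z))) := by
  have hF_mem : ∀ z, F z ∈ Icc (0:ℝ) 1 := fun z => by
    refine ⟨?_, hF_le z⟩
    rcases lt_or_ge z 0 with hz | hz
    · exact (hF_neg z hz).ge
    · exact (hF_neg (-1) (by norm_num)).symm.le.trans (hF (by linarith))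
  refine (tendsto_integral_of_dominated_convergence (fun z => w (1 - F z))
    (fun n => ((measurable_stepWeight n).comp hF.measurable).aestronglyMeasurable) hint
    (fun n => ae_of_all _ fun z => ?_)
    (ae_of_all _ fun z => tendsto_stepWeight hα hH hw_mono hw_holder hw0 (hF_mem z))).congr
    (integral_stepWeight_comp hF hF_neg hF_top hξ w)
  obtain ⟨hnonneg, hle⟩ := stepWeight_mem_Icc hw_mono hw0 n (hF_mem z)
  exact (Real.norm_of_nonneg hnonneg).trans_le hle

section Distribution

variable {Ω : Type*} [MeasurableSpace Ω] (μ : Measure Ω) {Y : Ω → ℝ}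

lemma monotone_measureReal_le [IsFiniteMeasure μ] : Monotone fun t => μ.real {ω | Y ω ≤ t} :=
  fun _ _ hab => measureReal_mono fun _ h => le_trans h hab

lemma measureReal_le_eq_zero_of_neg (hY : ∀ ω, 0 ≤ Y ω) {t : ℝ} (ht : t < 0) :
    μ.real {ω | Y ω ≤ t} = 0 := by
  rw [show {ω | Y ω ≤ t} = ∅ from
      eq_empty_of_forall_notMem fun ω h => (ht.trans_le (hY ω)).not_ge h,
    measureReal_empty]

lemma exists_le_measureReal_le [IsProbabilityMeasure μ] {p : ℝ} (hp : p < 1) :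
    ∃ t, p ≤ μ.real {ω | Y ω ≤ t} := by
  have hlim := tendsto_measure_iUnion_atTop (μ := μ)
    (fun _ _ hab _ h => le_trans h hab : Monotone fun t : ℝ => {ω | Y ω ≤ t})
  rw [iUnion_eq_univ_iff.2 fun ω => ⟨Y ω, le_refl (Y ω)⟩, measure_univ] at hlim
  obtain ⟨t, ht⟩ := (hlim.eventually (eventually_gt_nhds (ENNReal.ofReal_lt_one.2 hp))).exists
  exact ⟨t, (ENNReal.ofReal_le_iff_le_toReal (measure_ne_top μ _)).1 ht.le⟩

lemma measureReal_gt_eq_one_sub [IsProbabilityMeasure μ] (hY : Measurable Y) (z : ℝ) :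
    μ.real {ω | Y ω > z} = 1 - μ.real {ω | Y ω ≤ z} := by
  have hs : MeasurableSet {ω | Y ω ≤ z} := hY measurableSet_Iic
  rw [← probReal_compl_eq_one_sub hs, compl_ofPred]
  simp_rw [not_le]

end Distribution

theorem cpt_quantile_sums_tendsto_tail_integral_general
    {Ω : Type*} [MeasurableSpace Ω] (μ : Measure Ω) [IsProbabilityMeasure μ]
    (Y : Ω → ℝ) (hYmeas : Measurable Y) (hYnonneg : ∀ ω, 0 ≤ Y ω)
    (w : ℝ → ℝ) (α H γ : ℝ) (hα0 : 0 < α) (hH : 0 < H)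
    (hw_mono : MonotoneOn w (Set.Icc (0:ℝ) 1))
    (hw_holder : ∀ x ∈ Set.Icc (0:ℝ) 1, ∀ y ∈ Set.Icc (0:ℝ) 1,
      |w x - w y| ≤ H * |x - y| ^ α)
    (hw0 : w 0 = 0)
    (hγ0 : 0 < γ) (hγα : γ ≤ α)
    (hint : ∫⁻ z in Set.Ioi (0:ℝ),
        ENNReal.ofReal ((μ {ω | Y ω > z}).toReal ^ γ) < ⊤)
    -- `ξ p` is the `p`-th quantile of `Y`
    (ξ : ℝ → ℝ)
    (hξ : ∀ p ∈ Set.Ioo (0:ℝ) 1, ξ p = sInf {t : ℝ | p ≤ (μ {ω | Y ω ≤ t}).toReal}) :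
    Tendsto (fun n : ℕ => ∑ i ∈ Finset.Icc 1 (n - 1),
        ξ ((i : ℝ) / n) * (w (((n : ℝ) - i) / n) - w (((n : ℝ) - i - 1) / n)))
      atTop (nhds (∫ z in Set.Ioi (0:ℝ), w ((μ {ω | Y ω > z}).toReal))) ∧
    IntegrableOn (fun z => w ((μ {ω | Y ω > z}).toReal)) (Set.Ioi (0:ℝ)) := by
  set F : ℝ → ℝ := fun t => μ.real {ω | Y ω ≤ t}
  have hG : ∀ z, (μ {ω | Y ω > z}).toReal = 1 - F z := measureReal_gt_eq_one_sub μ hYmeas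
  have hG_mem : ∀ z, (μ {ω | Y ω > z}).toReal ∈ Icc (0:ℝ) 1 := fun z =>
    ⟨ENNReal.toReal_nonneg, measureReal_le_one⟩
  have hG_anti : Antitone fun z => (μ {ω | Y ω > z}).toReal := fun a b hab => by
    simp only [hG]; linarith [monotone_measureReal_le μ (Y := Y) hab]
  have hInt := integrableOn_comp_of_lintegral_rpow_lt_top hG_anti hG_mem hH.le hγ0.le hγα
    hw_mono hw_holder hw0 hint
  refine ⟨?_, hInt⟩
  simp only [hG] at hInt ⊢
  exact tendsto_sum_quantile_mul_weight_sub (monotone_measureReal_le μ)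
    (fun _ => measureReal_le_eq_zero_of_neg μ hYnonneg) (fun _ => measureReal_le_one)
    (fun _ => exists_le_measureReal_le μ) hα0 hH.le hw_mono hw_holder hw0 hInt hξ

/-- For a nonnegative random variable `Y` and a nondecreasing Hölder
continuous weight function `w : [0,1] → [0,1]` of order `α` with constant `H`,
`w 0 = 0`, `w 1 = 1`, if `∫₀^∞ P(Y > z)^γ dz < ∞` for some `0 < γ ≤ α`, then the
quantile sums `Σ_{i=1}^{n-1} ξ_{i/n} (w((n-i)/n) - w((n-i-1)/n))` converge to
`∫₀^∞ w(P(Y > z)) dz`, and this limit is finite (the integrand is integrable). -/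
theorem cpt_quantile_sums_tendsto_tail_integral
    {Ω : Type*} [MeasurableSpace Ω] (μ : Measure Ω) [IsProbabilityMeasure μ]
    (Y : Ω → ℝ) (hYmeas : Measurable Y) (hYnonneg : ∀ ω, 0 ≤ Y ω)
    (w : ℝ → ℝ) (α H γ : ℝ) (hα0 : 0 < α) (hα1 : α ≤ 1) (hH : 0 < H)
    (hw_range : ∀ x ∈ Set.Icc (0:ℝ) 1, w x ∈ Set.Icc (0:ℝ) 1)
    (hw_mono : MonotoneOn w (Set.Icc (0:ℝ) 1))
    (hw_holder : ∀ x ∈ Set.Icc (0:ℝ) 1, ∀ y ∈ Set.Icc (0:ℝ) 1,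
      |w x - w y| ≤ H * |x - y| ^ α)
    (hw0 : w 0 = 0) (hw1 : w 1 = 1)
    (hγ0 : 0 < γ) (hγα : γ ≤ α)
    (hint : ∫⁻ z in Set.Ioi (0:ℝ),
        ENNReal.ofReal ((μ {ω | Y ω > z}).toReal ^ γ) < ⊤)
    -- `ξ p` is the `p`-th quantile of `Y`
    (ξ : ℝ → ℝ)
    (hξ : ∀ p ∈ Set.Ioo (0:ℝ) 1, ξ p = sInf {t : ℝ | p ≤ (μ {ω | Y ω ≤ t}).toReal}) :
    Tendsto (fun n : ℕ => ∑ i ∈ Finset.Icc 1 (n - 1),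
        ξ ((i : ℝ) / n) * (w (((n : ℝ) - i) / n) - w (((n : ℝ) - i - 1) / n)))
      atTop (nhds (∫ z in Set.Ioi (0:ℝ), w ((μ {ω | Y ω > z}).toReal))) ∧
    IntegrableOn (fun z => w ((μ {ω | Y ω > z}).toReal)) (Set.Ioi (0:ℝ)) :=
  cpt_quantile_sums_tendsto_tail_integral_general μ Y hYmeas hYnonneg w α H γ hα0 hH hw_mono
    hw_holder hw0 hγ0 hγα hint ξ hξ
end

section
/- Let X be a real random variable, u⁺, u⁻ : ℝ → [0,∞) continuous utility functions (u⁺ nondecreasing, u⁻ nonincreasing) such that u⁺(X) and u⁻(X) have finite first moments, and w⁺, w⁻ : [0,1] → [0,1] nondecreasing continuous weight functions with w⁺(0) = w⁻(0) = 0 and w⁺(1) = w⁻(1) = 1 that are Lipschitz continuous with common constant L. Let X₁, X₂, … be i.i.d. copies of X, and define the estimator C̄ₙ = Σ_{i=1}^{n−1} u⁺(X_[i]) ( w⁺((n−i)/n) − w⁺((n−i−1)/n) ) − Σ_{i=1}^{n−1} u⁻(X_[i]) ( w⁻(i/n) − w⁻((i−1)/n) ), where X_[1] ≤ … ≤ X_[n]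 are the order statistics of the first n samples. Then C̄ₙ → C(X) almost surely as n → ∞. -/
/-!
Write `vⱼ = u(Xⱼ) ≥ 0` and `Fₙ(z) = #{j < n | z < vⱼ} / n` for the empirical tail. Summation by
parts shows that `∫₀^∞ w(Fₙ)` is the L-statistic `∑ₖ (w(k/n) - w((k-1)/n)) v₍ₙ₊₁₋ₖ₎`, and each of
the two sums of the estimator differs from it by at most `(L/n) max_{j<n} vⱼ`, which tends to `0`
because `vₙ/n → 0` by the strong law of large numbers.

By the strong law again, `Fₙ(q) → G(q) = P(u(X) > q)` for every rational `q`, hence at every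
continuity point of the antitone function `G`, i.e. almost everywhere; moreover
`∫ Fₙ = (1/n) ∑ vⱼ → E u(X) = ∫ G` (layer cake). Scheffé's argument then gives `∫ |Fₙ - G| → 0`,
and `|∫ w(Fₙ) - ∫ w(G)| ≤ L ∫ |Fₙ - G|` concludes.
-/

open MeasureTheory Filter

/-- The `i`-th order statistic (1-indexed, i.e. the `i`-th smallest value) of the
first `n` samples `x 0, …, x (n-1)`. -/
noncomputable def orderStat (n : ℕ) (x : ℕ → ℝ) (i : ℕ) : ℝ :=
  ((List.ofFn fun j : Fin n => x j).insertionSort (· ≤ ·)).getD (i - 1) 0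

/-- The order-statistics based CPT-value estimator
`C̄ₙ = Σ_{i=1}^{n-1} u⁺(X_[i]) (w⁺((n-i)/n) - w⁺((n-i-1)/n))
     - Σ_{i=1}^{n-1} u⁻(X_[i]) (w⁻(i/n) - w⁻((i-1)/n))`. -/
noncomputable def cptEstimator (uP uM wP wM : ℝ → ℝ) (n : ℕ) (x : ℕ → ℝ) : ℝ :=
  (∑ i ∈ Finset.Icc 1 (n - 1),
      uP (orderStat n x i) * (wP (((n : ℝ) - i) / n) - wP (((n : ℝ) - i - 1) / n)))
  - ∑ i ∈ Finset.Icc 1 (n - 1),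
      uM (orderStat n x i) * (wM ((i : ℝ) / n) - wM (((i : ℝ) - 1) / n))

open scoped NNReal Topology

open Finset

theorem List.le_countP_lt_iff_of_pairwise {ℓ : List ℝ} (hℓ : ℓ.Pairwise (· ≤ ·)) {z : ℝ} {k : ℕ}
    (hk : 1 ≤ k) (hkℓ : k ≤ ℓ.length) :
    k ≤ ℓ.countP (z < ·) ↔ z < ℓ.getD (ℓ.length - k) 0 := by
  induction ℓ generalizing k with
  | nil => simp at hkℓ; omega
  | cons a t ih =>
    obtain ⟨ha, ht⟩ := List.pairwise_cons.mp hℓ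
    simp only [List.length_cons] at hkℓ ⊢
    by_cases hza : z < a
    · have hall : t.countP (z < ·) = t.length :=
        List.countP_eq_length.mpr fun b hb => decide_eq_true (hza.trans_le (ha b hb))
      rw [List.countP_cons_of_pos (by simpa using hza), hall]
      refine iff_of_true hkℓ ?_
      rcases Nat.lt_or_ge k (t.length + 1) with hlt | hge
      · rw [show t.length + 1 - k = (t.length - k) + 1 by omega, List.getD_cons_succ]
        rw [List.getD_eq_getElem _ _ (by omega)]
        exact hza.trans_le (ha _ (List.getElem_mem _))
      · rwa [show t.length + 1 - k = 0 by omega, List.getD_cons_zero]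
    · rw [List.countP_cons_of_neg (by simpa using hza)]
      rcases Nat.lt_or_ge k (t.length + 1) with hlt | hge
      · rw [show t.length + 1 - k = (t.length - k) + 1 by omega, List.getD_cons_succ]
        exact ih ht hk (by omega)
      · rw [show t.length + 1 - k = 0 by omega, List.getD_cons_zero]
        exact iff_of_false (by have := t.countP_le_length (p := (z < ·)); omega) hza

noncomputable def sortedSample (n : ℕ) (x : ℕ → ℝ) : List ℝ :=
  (List.ofFn fun j : Fin n => x j).insertionSort (· ≤ ·)

theorem card_filter_range_eq_countP_ofFn (n : ℕ) (x : ℕ → ℝ) (p : ℝ → Prop) [DecidablePred p] :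
    #{j ∈ range n | p (x j)} = (List.ofFn fun j : Fin n => x j).countP p := by
  have : (List.ofFn fun j : Fin n => x j) = (List.range n).map x := by
    rw [List.ofFn_eq_map, ← List.map_coe_finRange_eq_range, List.map_map]; rfl
  rw [this, List.countP_map, List.countP_eq_length_filter]
  simp [Finset.card, Finset.filter_val, Finset.range_val, Multiset.range, Function.comp_def]

section OrderStatistics

variable (n : ℕ) (x : ℕ → ℝ)

theorem orderStat_eq_getD (i : ℕ) : orderStat n x i = (sortedSample n x).getD (i - 1) 0 := rfl

@[simp]
theorem length_sortedSample : (sortedSample n x).length = n := by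
  simp [sortedSample]

theorem perm_sortedSample : (sortedSample n x).Perm (List.ofFn fun j : Fin n => x j) :=
  List.perm_insertionSort _ _

theorem pairwise_sortedSample : (sortedSample n x).Pairwise (· ≤ ·) :=
  List.pairwise_insertionSort _ _

variable {n}

theorem exists_orderStat_eq {i : ℕ} (hi : 1 ≤ i) (hin : i ≤ n) :
    ∃ j < n, orderStat n x i = x j := by
  have hmem : orderStat n x i ∈ sortedSample n x := by
    rw [orderStat_eq_getD, List.getD_eq_getElem _ _ (by simp; omega)]
    exact List.getElem_mem _
  obtain ⟨j, hj⟩ := List.mem_ofFn.mp ((perm_sortedSample n x).mem_iff.mp hmem)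
  exact ⟨j, j.isLt, hj.symm⟩

theorem orderStat_le_orderStat {i j : ℕ} (hi : 1 ≤ i) (hij : i ≤ j) (hjn : j ≤ n) :
    orderStat n x i ≤ orderStat n x j := by
  simp only [orderStat_eq_getD]
  rw [List.getD_eq_getElem _ _ (by simp; omega), List.getD_eq_getElem _ _ (by simp; omega)]
  exact List.sortedLE_iff_getElem_le_getElem_of_le.mp
    (pairwise_sortedSample n x).sortedLE (by omega)

theorem orderStat_nonneg (hx : ∀ j, 0 ≤ x j) (i : ℕ) : 0 ≤ orderStat n x i := by
  rw [orderStat_eq_getD]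
  rcases lt_or_ge (i - 1) (sortedSample n x).length with hi | hi
  · have hmem := (perm_sortedSample n x).mem_iff.mp (List.getElem_mem hi)
    obtain ⟨j, hj⟩ := List.mem_ofFn.mp hmem
    rw [List.getD_eq_getElem _ _ hi, ← hj]
    exact hx j
  · rw [List.getD_eq_default _ _ hi]

theorem sortedSample_comp_of_monotone {u : ℝ → ℝ} (hu : Monotone u) :
    sortedSample n (u ∘ x) = (sortedSample n x).map u := by
  refine ((perm_sortedSample n (u ∘ x)).trans ?_).eq_of_pairwise' (pairwise_sortedSample n _)
    ((List.pairwise_map.mpr ((pairwise_sortedSample n x).imp fun h => hu h)))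
  simpa [List.map_ofFn, Function.comp_def] using ((perm_sortedSample n x).map u).symm

theorem sortedSample_comp_of_antitone {u : ℝ → ℝ} (hu : Antitone u) :
    sortedSample n (u ∘ x) = ((sortedSample n x).map u).reverse := by
  refine ((perm_sortedSample n (u ∘ x)).trans ?_).eq_of_pairwise' (pairwise_sortedSample n _)
    (List.pairwise_reverse.mpr
      (List.pairwise_map.mpr ((pairwise_sortedSample n x).imp fun h => hu h)))
  simpa [List.map_ofFn, Function.comp_def] using
    ((List.reverse_perm _).trans ((perm_sortedSample n x).map u)).symm

theorem orderStat_comp_of_monotone {u : ℝ → ℝ} (hu : Monotone u) {i : ℕ} (hi : 1 ≤ i)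
    (hin : i ≤ n) : orderStat n (u ∘ x) i = u (orderStat n x i) := by
  simp only [orderStat_eq_getD, sortedSample_comp_of_monotone x hu]
  rw [List.getD_eq_getElem _ _ (by simp; omega), List.getD_eq_getElem _ _ (by simp; omega),
    List.getElem_map]

theorem orderStat_comp_of_antitone {u : ℝ → ℝ} (hu : Antitone u) {i : ℕ} (hi : 1 ≤ i)
    (hin : i ≤ n) : orderStat n (u ∘ x) (n + 1 - i) = u (orderStat n x i) := by
  simp only [orderStat_eq_getD, sortedSample_comp_of_antitone x hu]
  rw [List.getD_eq_getElem _ _ (by simp; omega), List.getD_eq_getElem _ _ (by simp; omega),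
    List.getElem_reverse, List.getElem_map]
  congr 2
  simp; omega

theorem le_card_filter_lt_iff_lt_orderStat {z : ℝ} {k : ℕ} (hk : 1 ≤ k) (hkn : k ≤ n) :
    k ≤ #{j ∈ range n | z < x j} ↔ z < orderStat n x (n + 1 - k) := by
  have hcard : #{j ∈ range n | z < x j} = (sortedSample n x).countP (z < ·) := by
    rw [(perm_sortedSample n x).countP_eq, card_filter_range_eq_countP_ofFn]
  rw [hcard, List.le_countP_lt_iff_of_pairwise (pairwise_sortedSample n x) hk (by simpa),
    orderStat_eq_getD, length_sortedSample, show n + 1 - k - 1 = n - k by omega]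

end OrderStatistics

noncomputable def empiricalTail (n : ℕ) (v : ℕ → ℝ) (z : ℝ) : ℝ :=
  (#{j ∈ range n | z < v j} : ℝ) / n

theorem ite_lt_eq_indicator_Iio (a : ℝ) :
    (fun z => if z < a then (1 : ℝ) else 0) = (Set.Iio a).indicator 1 := by
  ext z; simp [Set.indicator_apply]

theorem integrableOn_Ioi_ite_lt (a : ℝ) :
    IntegrableOn (fun z => if z < a then (1 : ℝ) else 0) (Set.Ioi 0) := by
  rw [ite_lt_eq_indicator_Iio, IntegrableOn, integrable_indicator_iff measurableSet_Iio,
    IntegrableOn, Measure.restrict_restrict measurableSet_Iio, Set.Iio_inter_Ioi]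
  exact integrableOn_const measure_Ioo_lt_top.ne

theorem setIntegral_Ioi_ite_lt (a : ℝ) :
    ∫ z in Set.Ioi 0, (if z < a then (1 : ℝ) else 0) = max a 0 := by
  rw [ite_lt_eq_indicator_Iio, integral_indicator measurableSet_Iio,
    Measure.restrict_restrict measurableSet_Iio,
    Set.Iio_inter_Ioi, Pi.one_def, setIntegral_const, Real.volume_real_Ioo, smul_eq_mul, mul_one,
    sub_zero]

theorem sum_Icc_sub_natCast_sub_one (f : ℝ → ℝ) (m : ℕ) :
    ∑ k ∈ Icc 1 m, (f k - f (k - 1)) = f m - f 0 := by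
  induction m with
  | zero => simp
  | succ m ih => rw [sum_Icc_succ_top (by omega), ih]; push_cast; ring_nf

section EmpiricalTail

variable (n : ℕ) (v : ℕ → ℝ)

theorem empiricalTail_eq_sum (z : ℝ) :
    empiricalTail n v z = (∑ j ∈ range n, if z < v j then 1 else 0) / n := by
  rw [empiricalTail, natCast_card_filter]

theorem empiricalTail_mem_Icc (z : ℝ) : empiricalTail n v z ∈ Set.Icc 0 1 := by
  refine ⟨by unfold empiricalTail; positivity, div_le_one_of_le₀ ?_ n.cast_nonneg⟩
  exact_mod_cast (card_filter_le _ _).trans (card_range n).le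

theorem antitone_empiricalTail : Antitone (empiricalTail n v) := fun z z' h => by
  unfold empiricalTail
  gcongr

theorem integrableOn_empiricalTail : IntegrableOn (empiricalTail n v) (Set.Ioi 0) := by
  simp_rw [funext (empiricalTail_eq_sum n v)]
  exact (integrable_finsetSum _ fun j _ => integrableOn_Ioi_ite_lt (v j)).div_const _

theorem integral_empiricalTail (hv : ∀ j, 0 ≤ v j) :
    ∫ z in Set.Ioi 0, empiricalTail n v z = (∑ j ∈ range n, v j) / n := by
  simp_rw [empiricalTail_eq_sum, integral_div]
  rw [integral_finsetSum _ fun j _ => integrableOn_Ioi_ite_lt (v j)]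
  simp_rw [setIntegral_Ioi_ite_lt, max_eq_left (hv _)]

theorem comp_empiricalTail_eq_sum {w : ℝ → ℝ} (hw0 : w 0 = 0) (z : ℝ) :
    w (empiricalTail n v z) = ∑ k ∈ Icc 1 n,
      (w (k / n) - w ((k - 1) / n)) * (if z < orderStat n v (n + 1 - k) then 1 else 0) := by
  have hc : #{j ∈ range n | z < v j} ≤ n := (card_filter_le _ _).trans (card_range n).le
  have hfilter :
      {k ∈ Icc 1 n | z < orderStat n v (n + 1 - k)} = Icc 1 #{j ∈ range n | z < v j} := by
    ext k
    simp only [mem_filter, mem_Icc]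
    constructor
    · rintro ⟨⟨hk, hkn⟩, hz⟩
      exact ⟨hk, (le_card_filter_lt_iff_lt_orderStat v hk hkn).mpr hz⟩
    · rintro ⟨hk, hkc⟩
      exact ⟨⟨hk, hkc.trans hc⟩, (le_card_filter_lt_iff_lt_orderStat v hk (hkc.trans hc)).mp hkc⟩
  simp_rw [mul_ite, mul_one, mul_zero, ← sum_filter]
  rw [hfilter, sum_Icc_sub_natCast_sub_one (fun t => w (t / n)), zero_div, hw0, sub_zero]
  rfl

theorem integral_comp_empiricalTail (hv : ∀ j, 0 ≤ v j) {w : ℝ → ℝ} (hw0 : w 0 = 0) :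
    ∫ z in Set.Ioi 0, w (empiricalTail n v z) =
      ∑ k ∈ Icc 1 n, (w (k / n) - w ((k - 1) / n)) * orderStat n v (n + 1 - k) := by
  simp_rw [comp_empiricalTail_eq_sum n v hw0]
  rw [integral_finsetSum _ fun k _ => (integrableOn_Ioi_ite_lt _).const_mul _]
  simp_rw [integral_const_mul, setIntegral_Ioi_ite_lt, max_eq_left (orderStat_nonneg v hv _)]

end EmpiricalTail

theorem abs_sum_Icc_mul_sub_sum_Icc_mul_le {m : ℕ} {a c Δ : ℕ → ℝ} {δ : ℝ}
    (hc : ∀ k ∈ Icc 1 m, a (k + 1) ≤ c k ∧ c k ≤ a k) (ha : 0 ≤ a (m + 1))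
    (hΔ : ∀ k ∈ Icc 1 (m + 1), |Δ k| ≤ δ) :
    |∑ k ∈ Icc 1 (m + 1), Δ k * a k - ∑ k ∈ Icc 1 m, Δ k * c k| ≤ δ * a 1 := by
  have hδ : 0 ≤ δ := (abs_nonneg _).trans (hΔ 1 (by simp))
  have htel : ∑ k ∈ Icc 1 m, (a k - a (k + 1)) = a 1 - a (m + 1) := by
    rcases Nat.eq_zero_or_pos m with rfl | hm
    · simp
    · rw [← neg_sub, ← sum_Icc_sub hm, ← sum_neg_distrib]; simp
  calc |∑ k ∈ Icc 1 (m + 1), Δ k * a k - ∑ k ∈ Icc 1 m, Δ k * c k|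
      = |∑ k ∈ Icc 1 m, Δ k * (a k - c k) + Δ (m + 1) * a (m + 1)| := by
        rw [sum_Icc_succ_top (by omega)]; simp only [mul_sub, sum_sub_distrib]; ring_nf
    _ ≤ ∑ k ∈ Icc 1 m, |Δ k| * (a k - c k) + |Δ (m + 1)| * a (m + 1) := by
        refine (abs_add_le _ _).trans (add_le_add ((abs_sum_le_sum_abs _ _).trans_eq ?_) ?_)
        · refine sum_congr rfl fun k hk => ?_
          rw [abs_mul, abs_of_nonneg (sub_nonneg.mpr (hc k hk).2)]
        · rw [abs_mul, abs_of_nonneg ha]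
    _ ≤ ∑ k ∈ Icc 1 m, δ * (a k - a (k + 1)) + δ * a (m + 1) := by
        gcongr with k hk
        · exact sub_nonneg.mpr (hc k hk).2
        · exact hΔ k (by simp at hk ⊢; omega)
        · exact (hc k hk).1
        · exact hΔ (m + 1) (by simp)
    _ = δ * a 1 := by rw [← mul_sum, htel]; ring

theorem LipschitzOnWith.abs_div_sub_sub_one_div_le {w : ℝ → ℝ} {K : ℝ≥0}
    (hw : LipschitzOnWith K w (Set.Icc 0 1)) {n k : ℕ} (hk : 1 ≤ k) (hkn : k ≤ n) :
    |w (k / n) - w ((k - 1) / n)| ≤ K / n := by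
  have hn : (0 : ℝ) < n := by exact_mod_cast (show 0 < n by omega)
  have hk' : (1 : ℝ) ≤ k := by exact_mod_cast hk
  have hkn' : (k : ℝ) ≤ n := by exact_mod_cast hkn
  have hmem : ∀ t : ℝ, 0 ≤ t → t ≤ n → t / n ∈ Set.Icc (0 : ℝ) 1 := fun t h0 h1 =>
    ⟨div_nonneg h0 hn.le, div_le_one_of_le₀ h1 hn.le⟩
  calc |w (k / n) - w ((k - 1) / n)| = dist (w (k / n)) (w ((k - 1) / n)) :=
        (Real.dist_eq _ _).symm
    _ ≤ K * dist ((k : ℝ) / n) ((k - 1) / n) :=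
        hw.dist_le_mul _ (hmem k (by linarith) hkn') _ (hmem (k - 1) (by linarith) (by linarith))
    _ = K / n := by rw [Real.dist_eq, ← sub_div, sub_sub_cancel, abs_of_pos (by positivity)]; ring

theorem tendsto_div_add_one_of_tendsto_sum_div {v : ℕ → ℝ} {m : ℝ}
    (h : Tendsto (fun n : ℕ => (∑ j ∈ range n, v j) / n) atTop (𝓝 m)) :
    Tendsto (fun n : ℕ => v n / (n + 1)) atTop (𝓝 0) := by
  have hsucc : Tendsto (fun n : ℕ => (∑ j ∈ range (n + 1), v j) / (n + 1)) atTop (𝓝 m) := by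
    refine (h.comp (tendsto_add_atTop_nat 1)).congr fun n => ?_
    simp
  have hscaled := h.mul (tendsto_natCast_div_add_atTop (1 : ℝ))
  rw [mul_one] at hscaled
  rw [← sub_self m]
  refine (hsucc.sub hscaled).congr fun n => ?_
  rw [sum_range_succ]
  rcases Nat.eq_zero_or_pos n with rfl | hn
  · simp
  · field_simp
    ring

theorem tendsto_orderStat_self_div {v : ℕ → ℝ} (hv : ∀ j, 0 ≤ v j) {m : ℝ}
    (h : Tendsto (fun n : ℕ => (∑ j ∈ range n, v j) / n) atTop (𝓝 m)) :
    Tendsto (fun n : ℕ => orderStat n v n / n) atTop (𝓝 0) := by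
  refine tendsto_order.2 ⟨fun a ha => Eventually.of_forall fun n =>
    ha.trans_le (div_nonneg (orderStat_nonneg v hv n) n.cast_nonneg), fun ε hε => ?_⟩
  obtain ⟨N, hN⟩ := eventually_atTop.mp
    ((tendsto_div_add_one_of_tendsto_sum_div h).eventually (gt_mem_nhds hε))
  have hlarge : ∀ᶠ n : ℕ in atTop, ∑ j ∈ range N, v j < ε * n :=
    (tendsto_natCast_atTop_atTop.const_mul_atTop hε).eventually_gt_atTop _
  filter_upwards [hlarge, eventually_ge_atTop (max N 1)] with n hCn hn
  have hn0 : (0 : ℝ) < n := by exact_mod_cast (show 0 < n by omega)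
  obtain ⟨j, hjn, hj⟩ := exists_orderStat_eq v (le_of_max_le_right hn) le_rfl
  rw [hj, div_lt_iff₀ hn0]
  rcases lt_or_ge j N with hjN | hjN
  · exact (single_le_sum (fun i _ => hv i) (mem_range.mpr hjN)).trans_lt hCn
  · have := hN j hjN
    rw [div_lt_iff₀ (by positivity)] at this
    have : (j : ℝ) + 1 ≤ n := by exact_mod_cast hjn
    nlinarith

theorem tendsto_sum_sub_integral_comp_empiricalTail {v : ℕ → ℝ} (hv : ∀ j, 0 ≤ v j) {m : ℝ}
    (hmean : Tendsto (fun n : ℕ => (∑ j ∈ range n, v j) / n) atTop (𝓝 m))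
    {w : ℝ → ℝ} {K : ℝ≥0} (hw : LipschitzOnWith K w (Set.Icc 0 1)) (hw0 : w 0 = 0)
    {c : ℕ → ℕ → ℝ}
    (hc : ∀ n, ∀ k ∈ Icc 1 (n - 1),
      orderStat n v (n - k) ≤ c n k ∧ c n k ≤ orderStat n v (n + 1 - k)) :
    Tendsto (fun n : ℕ => ∑ k ∈ Icc 1 (n - 1), (w (k / n) - w ((k - 1) / n)) * c n k
      - ∫ z in Set.Ioi 0, w (empiricalTail n v z)) atTop (𝓝 0) := by
  have hbound : ∀ n : ℕ, 1 ≤ n → ‖∑ k ∈ Icc 1 (n - 1), (w (k / n) - w ((k - 1) / n)) * c n k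
      - ∫ z in Set.Ioi 0, w (empiricalTail n v z)‖ ≤ K * (orderStat n v n / n) := by
    intro n hn
    obtain ⟨p, rfl⟩ : ∃ p, n = p + 1 := ⟨n - 1, by omega⟩
    rw [integral_comp_empiricalTail _ _ hv hw0, Real.norm_eq_abs, abs_sub_comm,
      Nat.add_sub_cancel, mul_div_assoc', ← div_mul_eq_mul_div]
    refine abs_sum_Icc_mul_sub_sum_Icc_mul_le (fun k hk => ?_) (orderStat_nonneg v hv _)
      (fun k hk => ?_)
    · rw [Nat.add_sub_add_right]; exact hc _ k hk
    · simp only [mem_Icc] at hk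
      exact hw.abs_div_sub_sub_one_div_le hk.1 hk.2
  refine squeeze_zero_norm' (eventually_atTop.mpr ⟨1, hbound⟩) ?_
  simpa using (tendsto_orderStat_self_div hv hmean).const_mul (K : ℝ)

theorem tendsto_of_antitone_of_tendsto_rat {f : ℕ → ℝ → ℝ} (hf : ∀ n, Antitone (f n))
    {G : ℝ → ℝ} {z : ℝ} (hG : ContinuousAt G z)
    (hq : ∀ q : ℚ, Tendsto (fun n => f n q) atTop (𝓝 (G q))) :
    Tendsto (fun n => f n z) atTop (𝓝 (G z)) := by
  refine tendsto_order.2 ⟨fun a ha => ?_, fun b hb => ?_⟩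
  · obtain ⟨δ, hδ, hball⟩ := Metric.eventually_nhds_iff.mp (hG.eventually (lt_mem_nhds ha))
    obtain ⟨q, hzq, hqδ⟩ := exists_rat_btwn (lt_add_of_pos_right z hδ)
    have hGq : a < G q := hball (by rw [Real.dist_eq, abs_lt]; constructor <;> linarith)
    filter_upwards [(hq q).eventually (lt_mem_nhds hGq)] with n hn
    exact hn.trans_le (hf n hzq.le)
  · obtain ⟨δ, hδ, hball⟩ := Metric.eventually_nhds_iff.mp (hG.eventually (gt_mem_nhds hb))
    obtain ⟨q, hqδ, hqz⟩ := exists_rat_btwn (sub_lt_self z hδ)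
    have hGq : G q < b := hball (by rw [Real.dist_eq, abs_lt]; constructor <;> linarith)
    filter_upwards [(hq q).eventually (gt_mem_nhds hGq)] with n hn
    exact (hf n hqz.le).trans_lt hn

section Integrals

variable {α : Type*} [MeasurableSpace α] {ν : Measure α}

theorem tendsto_integral_abs_sub_of_tendsto_ae {f : ℕ → α → ℝ} {g : α → ℝ}
    (hf : ∀ n, Integrable (f n) ν) (hg : Integrable g ν) (hf0 : ∀ n, 0 ≤ᵐ[ν] f n)
    (hlim : ∀ᵐ x ∂ν, Tendsto (fun n => f n x) atTop (𝓝 (g x)))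
    (hint : Tendsto (fun n => ∫ x, f n x ∂ν) atTop (𝓝 (∫ x, g x ∂ν))) :
    Tendsto (fun n => ∫ x, |f n x - g x| ∂ν) atTop (𝓝 0) := by
  have hgap : ∀ n, Integrable (fun x => max (g x - f n x) 0) ν := fun n =>
    (hg.sub (hf n)).pos_part
  -- Scheffé: `(g - fₙ)⁺ ≤ |g|` as `fₙ ≥ 0`, so dominated convergence applies to it.
  have hgap_lim : Tendsto (fun n => ∫ x, max (g x - f n x) 0 ∂ν) atTop (𝓝 0) := by
    have := tendsto_integral_of_dominated_convergence (fun x => |g x|)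
      (fun n => (hgap n).aestronglyMeasurable) hg.abs
      (fun n => by
        filter_upwards [hf0 n] with x hx
        rw [Real.norm_eq_abs, abs_of_nonneg (le_max_right _ _)]
        have hx : 0 ≤ f n x := hx
        exact max_le (by linarith [le_abs_self (g x)]) (abs_nonneg _))
      (by
        filter_upwards [hlim] with x hx
        simpa using (tendsto_const_nhds.sub hx).max (tendsto_const_nhds (x := (0 : ℝ))))
    simpa using this
  have hsplit : ∀ n, ∫ x, |f n x - g x| ∂ν
      = (∫ x, f n x ∂ν - ∫ x, g x ∂ν) + 2 * ∫ x, max (g x - f n x) 0 ∂ν := by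
    intro n
    have hpt : (fun x => |f n x - g x|) = fun x => (f n x - g x) + 2 * max (g x - f n x) 0 := by
      ext x
      rcases le_total (f n x) (g x) with h | h
      · rw [abs_of_nonpos (by linarith), max_eq_left (by linarith)]; ring
      · rw [abs_of_nonneg (by linarith), max_eq_right (by linarith)]; ring
    rw [hpt, integral_add (f := fun x => f n x - g x) ((hf n).sub hg) ((hgap n).const_mul 2),
      integral_sub (hf n) hg, integral_const_mul]
  simp_rw [hsplit]
  simpa using (hint.sub_const (∫ x, g x ∂ν)).add (hgap_lim.const_mul 2)

variable {w : ℝ → ℝ} {K : ℝ≥0}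

theorem LipschitzOnWith.integrable_comp (hw : LipschitzOnWith K w (Set.Icc 0 1)) (hw0 : w 0 = 0)
    {f : α → ℝ} (hf : Integrable f ν) (hf01 : ∀ x, f x ∈ Set.Icc 0 1) :
    Integrable (fun x => w (f x)) ν := by
  obtain ⟨W, hW, hWw⟩ := hw.extend_real
  have hmeas : AEStronglyMeasurable (fun x => w (f x)) ν :=
    (hW.continuous.comp_aestronglyMeasurable hf.aestronglyMeasurable).congr
      (ae_of_all _ fun x => (hWw (hf01 x)).symm)
  refine (hf.norm.const_mul (K : ℝ)).mono' hmeas (ae_of_all _ fun x => ?_)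
  have := hw.dist_le_mul _ (hf01 x) 0 ⟨le_rfl, zero_le_one⟩
  rwa [hw0, dist_zero_right, dist_zero_right] at this

theorem abs_integral_comp_sub_integral_comp_le (hw : LipschitzOnWith K w (Set.Icc 0 1))
    {f g : α → ℝ} (hf01 : ∀ x, f x ∈ Set.Icc 0 1) (hg01 : ∀ x, g x ∈ Set.Icc 0 1)
    (hwf : Integrable (fun x => w (f x)) ν) (hwg : Integrable (fun x => w (g x)) ν)
    (hfg : Integrable (fun x => f x - g x) ν) :
    |∫ x, w (f x) ∂ν - ∫ x, w (g x) ∂ν| ≤ K * ∫ x, |f x - g x| ∂ν := by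
  rw [← integral_sub hwf hwg, ← integral_const_mul (μ := ν) (K : ℝ), ← Real.norm_eq_abs]
  refine norm_integral_le_of_norm_le (hfg.abs.const_mul (K : ℝ)) (ae_of_all _ fun x => ?_)
  rw [Real.norm_eq_abs, ← Real.dist_eq, ← Real.dist_eq]
  exact hw.dist_le_mul _ (hf01 x) _ (hg01 x)

end Integrals

theorem tendsto_integral_comp_empiricalTail {v : ℕ → ℝ} (hv : ∀ j, 0 ≤ v j) {G : ℝ → ℝ}
    (hG : Antitone G) (hG01 : ∀ z, G z ∈ Set.Icc 0 1) (hGint : IntegrableOn G (Set.Ioi 0))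
    (hq : ∀ q : ℚ, Tendsto (fun n => empiricalTail n v q) atTop (𝓝 (G q)))
    (hmean : Tendsto (fun n : ℕ => (∑ j ∈ range n, v j) / n) atTop
      (𝓝 (∫ z in Set.Ioi 0, G z)))
    {w : ℝ → ℝ} {K : ℝ≥0} (hw : LipschitzOnWith K w (Set.Icc 0 1)) (hw0 : w 0 = 0) :
    Tendsto (fun n => ∫ z in Set.Ioi 0, w (empiricalTail n v z)) atTop
      (𝓝 (∫ z in Set.Ioi 0, w (G z))) := by
  have hcont : ∀ᵐ z ∂volume.restrict (Set.Ioi 0), ContinuousAt G z :=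
    ae_restrict_of_ae <| (hG.countable_not_continuousAt.ae_notMem volume).mono fun z hz =>
      not_not.mp hz
  have hL1 : Tendsto (fun n => ∫ z in Set.Ioi 0, |empiricalTail n v z - G z|) atTop (𝓝 0) := by
    refine tendsto_integral_abs_sub_of_tendsto_ae (integrableOn_empiricalTail · v) hGint
      (fun n => ae_of_all _ fun z => (empiricalTail_mem_Icc n v z).1) ?_ ?_
    · filter_upwards [hcont] with z hz
      exact tendsto_of_antitone_of_tendsto_rat (antitone_empiricalTail · v) hz hq
    · simpa only [integral_empiricalTail _ v hv] using hmean
  rw [tendsto_iff_norm_sub_tendsto_zero]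
  refine squeeze_zero (fun n => norm_nonneg _) (fun n => ?_) (by simpa using hL1.const_mul (K : ℝ))
  exact abs_integral_comp_sub_integral_comp_le hw (empiricalTail_mem_Icc n v) hG01
    (hw.integrable_comp hw0 (integrableOn_empiricalTail n v) (empiricalTail_mem_Icc n v))
    (hw.integrable_comp hw0 hGint hG01) ((integrableOn_empiricalTail n v).sub hGint)

section Probability

open ProbabilityTheory

variable {Ω : Type*} [MeasurableSpace Ω] {μ : Measure Ω}

theorem strong_law_ae_comp {E : Type*} [MeasurableSpace E] {X : Ω → E} {Xs : ℕ → Ω → E}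
    (hindep : iIndepFun Xs μ) (hident : ∀ i, IdentDistrib (Xs i) X μ μ) {f : E → ℝ}
    (hf : Measurable f) (hfX : Integrable (fun ω => f (X ω)) μ) :
    ∀ᵐ ω ∂μ, Tendsto (fun n : ℕ => (∑ i ∈ range n, f (Xs i ω)) / n) atTop
      (𝓝 (∫ ω, f (X ω) ∂μ)) := by
  have hfident : ∀ i, IdentDistrib (fun ω => f (Xs i ω)) (fun ω => f (X ω)) μ μ :=
    fun i => (hident i).comp hf
  rw [← (hfident 0).integral_eq]
  exact strong_law_ae_real (fun i ω => f (Xs i ω)) ((hfident 0).integrable_iff.mpr hfX)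
    (fun i j hij => (hindep.comp (fun _ => f) (fun _ => hf)).indepFun hij)
    (fun i => (hfident i).trans (hfident 0).symm)

variable {Y : Ω → ℝ}

theorem antitone_toReal_measure_lt [IsFiniteMeasure μ] :
    Antitone fun z => (μ {ω | z < Y ω}).toReal := fun _ _ h =>
  ENNReal.toReal_mono (measure_ne_top μ _) (measure_mono fun _ hω => h.trans_lt hω)

theorem toReal_measure_lt_mem_Icc [IsProbabilityMeasure μ] (z : ℝ) :
    (μ {ω | z < Y ω}).toReal ∈ Set.Icc 0 1 :=
  ⟨ENNReal.toReal_nonneg, ENNReal.toReal_le_of_le_ofReal zero_le_one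
    (by simpa using prob_le_one (s := {ω | z < Y ω}))⟩

theorem integrableOn_toReal_measure_lt [IsFiniteMeasure μ] (hY : Integrable Y μ)
    (hY0 : 0 ≤ᵐ[μ] Y) : IntegrableOn (fun z => (μ {ω | z < Y ω}).toReal) (Set.Ioi 0) := by
  refine ⟨antitone_toReal_measure_lt.measurable.aestronglyMeasurable, ?_⟩
  rw [HasFiniteIntegral, setLIntegral_congr_fun measurableSet_Ioi fun z _ => by
    rw [Real.enorm_eq_ofReal ENNReal.toReal_nonneg, ENNReal.ofReal_toReal (measure_ne_top μ _)],
    ← lintegral_eq_lintegral_meas_lt μ hY0 hY.aemeasurable]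
  exact hY.lintegral_lt_top

variable {Ys : ℕ → Ω → ℝ}

theorem ae_tendsto_empiricalTail_rat [IsProbabilityMeasure μ] (hindep : iIndepFun Ys μ)
    (hident : ∀ i, IdentDistrib (Ys i) Y μ μ) (hY : Measurable Y) :
    ∀ᵐ ω ∂μ, ∀ q : ℚ, Tendsto (fun n => empiricalTail n (Ys · ω) q) atTop
      (𝓝 (μ {ω' | (q : ℝ) < Y ω'}).toReal) := by
  rw [ae_all_iff]
  intro q
  have hf : Measurable fun r : ℝ => if (q : ℝ) < r then (1 : ℝ) else 0 :=
    Measurable.ite measurableSet_Ioi measurable_const measurable_const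
  have hind :
      (fun ω => if (q : ℝ) < Y ω then (1 : ℝ) else 0) = {ω | (q : ℝ) < Y ω}.indicator 1 := by
    ext ω; simp [Set.indicator_apply]
  have hint : Integrable (fun ω => if (q : ℝ) < Y ω then (1 : ℝ) else 0) μ := by
    rw [hind]
    exact (integrable_const 1).indicator (measurableSet_lt measurable_const hY)
  filter_upwards [strong_law_ae_comp hindep hident hf hint] with ω hω
  rwa [hind, integral_indicator_one (measurableSet_lt measurable_const hY), measureReal_def,
    ← funext (empiricalTail_eq_sum · (Ys · ω) q)] at hω

theorem ae_tendsto_sum_mul_of_between_orderStat [IsProbabilityMeasure μ]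
    (hYs : ∀ i ω, 0 ≤ Ys i ω) (hindep : iIndepFun Ys μ)
    (hident : ∀ i, IdentDistrib (Ys i) Y μ μ) (hY : Measurable Y) (hYint : Integrable Y μ)
    {w : ℝ → ℝ} {K : ℝ≥0} (hw : LipschitzOnWith K w (Set.Icc 0 1)) (hw0 : w 0 = 0)
    {c : (ℕ → ℝ) → ℕ → ℕ → ℝ}
    (hc : ∀ v n, ∀ k ∈ Icc 1 (n - 1),
      orderStat n v (n - k) ≤ c v n k ∧ c v n k ≤ orderStat n v (n + 1 - k)) :
    ∀ᵐ ω ∂μ, Tendsto (fun n : ℕ =>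
        ∑ k ∈ Icc 1 (n - 1), (w (k / n) - w ((k - 1) / n)) * c (Ys · ω) n k) atTop
      (𝓝 (∫ z in Set.Ioi 0, w ((μ {ω' | z < Y ω'}).toReal))) := by
  have hY0 : 0 ≤ᵐ[μ] Y :=
    (hident 0).ae_mem_snd measurableSet_Ici (ae_of_all _ fun ω => hYs 0 ω)
  have hlayer := hYint.integral_eq_integral_meas_lt hY0
  simp only [measureReal_def] at hlayer
  filter_upwards [ae_tendsto_empiricalTail_rat hindep hident hY,
    strong_law_ae_comp hindep hident measurable_id hYint] with ω hq hmean
  simp only [id, hlayer] at hmean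
  simpa using (tendsto_sum_sub_integral_comp_empiricalTail (hYs · ω) hmean hw hw0 (hc _)).add
    (tendsto_integral_comp_empiricalTail (hYs · ω) antitone_toReal_measure_lt
      toReal_measure_lt_mem_Icc (integrableOn_toReal_measure_lt hYint hY0) hq hmean hw hw0)

end Probability

theorem sum_gain_eq_sum_orderStat_comp {u : ℝ → ℝ} (hu : Monotone u) (w : ℝ → ℝ) (n : ℕ)
    (x : ℕ → ℝ) :
    ∑ i ∈ Icc 1 (n - 1), u (orderStat n x i) * (w ((n - i) / n) - w ((n - i - 1) / n)) =
      ∑ k ∈ Icc 1 (n - 1), (w (k / n) - w ((k - 1) / n)) * orderStat n (u ∘ x) (n - k) := by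
  refine sum_nbij' (n - ·) (n - ·) (fun i hi => ?_) (fun k hk => ?_) (fun i hi => ?_)
    (fun k hk => ?_) (fun i hi => ?_) <;> simp only [mem_Icc] at * <;> try omega
  rw [Nat.sub_sub_self (by omega), orderStat_comp_of_monotone x hu hi.1 (by omega),
    Nat.cast_sub (by omega), mul_comm]

theorem sum_loss_eq_sum_orderStat_comp {u : ℝ → ℝ} (hu : Antitone u) (w : ℝ → ℝ) (n : ℕ)
    (x : ℕ → ℝ) :
    ∑ i ∈ Icc 1 (n - 1), u (orderStat n x i) * (w (i / n) - w ((i - 1) / n)) =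
      ∑ k ∈ Icc 1 (n - 1), (w (k / n) - w ((k - 1) / n)) * orderStat n (u ∘ x) (n + 1 - k) := by
  refine sum_congr rfl fun k hk => ?_
  simp only [mem_Icc] at hk
  rw [orderStat_comp_of_antitone x hu hk.1 (by omega), mul_comm]

section CPT

open ProbabilityTheory

variable {Ω : Type*} [MeasurableSpace Ω] {μ : Measure Ω} [IsProbabilityMeasure μ]
  {X : Ω → ℝ} {Xs : ℕ → Ω → ℝ} {w : ℝ → ℝ} {K : ℝ≥0}

theorem orderStat_sub_le_orderStat_add_one_sub (v : ℕ → ℝ) {n k : ℕ} (hk : k ∈ Icc 1 (n - 1)) :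
    orderStat n v (n - k) ≤ orderStat n v (n + 1 - k) := by
  simp only [mem_Icc] at hk
  exact orderStat_le_orderStat v (by omega) (by omega) (by omega)

theorem ae_tendsto_sum_gain (hX : Measurable X) (hindep : iIndepFun Xs μ)
    (hident : ∀ i, IdentDistrib (Xs i) X μ μ) {u : ℝ → ℝ} (hu : Monotone u) (hu0 : ∀ x, 0 ≤ u x)
    (huX : Integrable (fun ω => u (X ω)) μ) (hw : LipschitzOnWith K w (Set.Icc 0 1))
    (hw0 : w 0 = 0) :
    ∀ᵐ ω ∂μ, Tendsto (fun n : ℕ => ∑ i ∈ Icc 1 (n - 1),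
        u (orderStat n (Xs · ω) i) * (w ((n - i) / n) - w ((n - i - 1) / n))) atTop
      (𝓝 (∫ z in Set.Ioi 0, w ((μ {ω' | z < u (X ω')}).toReal))) := by
  simp_rw [sum_gain_eq_sum_orderStat_comp hu]
  exact ae_tendsto_sum_mul_of_between_orderStat (fun _ _ => hu0 _)
    (hindep.comp (fun _ => u) fun _ => hu.measurable) (fun i => (hident i).comp hu.measurable)
    (hu.measurable.comp hX) huX hw hw0 (c := fun v n k => orderStat n v (n - k))
    fun v n k hk => ⟨le_rfl, orderStat_sub_le_orderStat_add_one_sub v hk⟩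

theorem ae_tendsto_sum_loss (hX : Measurable X) (hindep : iIndepFun Xs μ)
    (hident : ∀ i, IdentDistrib (Xs i) X μ μ) {u : ℝ → ℝ} (hu : Antitone u) (hu0 : ∀ x, 0 ≤ u x)
    (huX : Integrable (fun ω => u (X ω)) μ) (hw : LipschitzOnWith K w (Set.Icc 0 1))
    (hw0 : w 0 = 0) :
    ∀ᵐ ω ∂μ, Tendsto (fun n : ℕ => ∑ i ∈ Icc 1 (n - 1),
        u (orderStat n (Xs · ω) i) * (w (i / n) - w ((i - 1) / n))) atTop
      (𝓝 (∫ z in Set.Ioi 0, w ((μ {ω' | z < u (X ω')}).toReal))) := by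
  simp_rw [sum_loss_eq_sum_orderStat_comp hu]
  exact ae_tendsto_sum_mul_of_between_orderStat (fun _ _ => hu0 _)
    (hindep.comp (fun _ => u) fun _ => hu.measurable) (fun i => (hident i).comp hu.measurable)
    (hu.measurable.comp hX) huX hw hw0 (c := fun v n k => orderStat n v (n + 1 - k))
    fun v n k hk => ⟨orderStat_sub_le_orderStat_add_one_sub v hk, le_rfl⟩

end CPT

theorem cptEstimator_tendsto_ae_of_lipschitz_general
    {Ω : Type*} [MeasurableSpace Ω] (μ : Measure Ω) [IsProbabilityMeasure μ]
    (X : Ω → ℝ) (hXmeas : Measurable X)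
    (Xs : ℕ → Ω → ℝ)
    (hindep : ProbabilityTheory.iIndepFun Xs μ)
    (hident : ∀ i, ProbabilityTheory.IdentDistrib (Xs i) X μ μ)
    (uP uM : ℝ → ℝ)
    (huPnn : ∀ x, 0 ≤ uP x) (huMnn : ∀ x, 0 ≤ uM x)
    (huPmono : Monotone uP) (huManti : Antitone uM)
    (huPint : Integrable (fun ω => uP (X ω)) μ)
    (huMint : Integrable (fun ω => uM (X ω)) μ)
    (wP wM : ℝ → ℝ)
    (hwP0 : wP 0 = 0) (hwM0 : wM 0 = 0)
    (L : ℝ)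
    (hwP_lip : ∀ x ∈ Set.Icc (0:ℝ) 1, ∀ y ∈ Set.Icc (0:ℝ) 1,
      |wP x - wP y| ≤ L * |x - y|)
    (hwM_lip : ∀ x ∈ Set.Icc (0:ℝ) 1, ∀ y ∈ Set.Icc (0:ℝ) 1,
      |wM x - wM y| ≤ L * |x - y|) :
    ∀ᵐ ω ∂μ, Tendsto (fun n : ℕ => cptEstimator uP uM wP wM n (fun j => Xs j ω))
      atTop (nhds
        ((∫ z in Set.Ioi (0:ℝ), wP ((μ {ω' | uP (X ω') > z}).toReal))
          - ∫ z in Set.Ioi (0:ℝ), wM ((μ {ω' | uM (X ω') > z}).toReal))) := by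
  filter_upwards [ae_tendsto_sum_gain hXmeas hindep hident huPmono huPnn huPint
      (LipschitzOnWith.of_dist_le' hwP_lip) hwP0,
    ae_tendsto_sum_loss hXmeas hindep hident huManti huMnn huMint
      (LipschitzOnWith.of_dist_le' hwM_lip) hwM0] with ω hgain hloss
  exact hgain.sub hloss

/-- almost sure convergence of the order-statistics CPT-value estimator
for Lipschitz continuous weights, assuming `u⁺(X)` and `u⁻(X)` have finite first
moments. -/
theorem cptEstimator_tendsto_ae_of_lipschitz
    {Ω : Type*} [MeasurableSpace Ω] (μ : Measure Ω) [IsProbabilityMeasure μ]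
    (X : Ω → ℝ) (hXmeas : Measurable X)
    (Xs : ℕ → Ω → ℝ) (hXsmeas : ∀ i, Measurable (Xs i))
    (hindep : ProbabilityTheory.iIndepFun Xs μ)
    (hident : ∀ i, ProbabilityTheory.IdentDistrib (Xs i) X μ μ)
    (uP uM : ℝ → ℝ) (huPcont : Continuous uP) (huMcont : Continuous uM)
    (huPnn : ∀ x, 0 ≤ uP x) (huMnn : ∀ x, 0 ≤ uM x)
    (huPmono : Monotone uP) (huManti : Antitone uM)
    (huPint : Integrable (fun ω => uP (X ω)) μ)
    (huMint : Integrable (fun ω => uM (X ω)) μ)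
    (wP wM : ℝ → ℝ)
    (hwP_range : ∀ x ∈ Set.Icc (0:ℝ) 1, wP x ∈ Set.Icc (0:ℝ) 1)
    (hwM_range : ∀ x ∈ Set.Icc (0:ℝ) 1, wM x ∈ Set.Icc (0:ℝ) 1)
    (hwP_mono : MonotoneOn wP (Set.Icc (0:ℝ) 1))
    (hwM_mono : MonotoneOn wM (Set.Icc (0:ℝ) 1))
    (hwP0 : wP 0 = 0) (hwP1 : wP 1 = 1) (hwM0 : wM 0 = 0) (hwM1 : wM 1 = 1)
    (L : ℝ) (hL : 0 < L)
    (hwP_lip : ∀ x ∈ Set.Icc (0:ℝ) 1, ∀ y ∈ Set.Icc (0:ℝ) 1,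
      |wP x - wP y| ≤ L * |x - y|)
    (hwM_lip : ∀ x ∈ Set.Icc (0:ℝ) 1, ∀ y ∈ Set.Icc (0:ℝ) 1,
      |wM x - wM y| ≤ L * |x - y|) :
    ∀ᵐ ω ∂μ, Tendsto (fun n : ℕ => cptEstimator uP uM wP wM n (fun j => Xs j ω))
      atTop (nhds
        ((∫ z in Set.Ioi (0:ℝ), wP ((μ {ω' | uP (X ω') > z}).toReal))
          - ∫ z in Set.Ioi (0:ℝ), wM ((μ {ω' | uM (X ω') > z}).toReal))) :=
  cptEstimator_tendsto_ae_of_lipschitz_general μ X hXmeas Xs hindep hident uP uM huPnn huMnn huPmono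
    huManti huPint huMint wP wM hwP0 hwM0 L hwP_lip hwM_lip
end

section
/- Let f : ℝ^d → ℝ be three times continuously differentiable with all third-order partial derivatives bounded in norm by B on ℝ^d. Let Δ = (Δ¹, …, Δ^d) be a random vector whose coordinates are independent Rademacher random variables (taking values +1 and −1 with probability 1/2 each). Then for every θ ∈ ℝ^d, every δ > 0 and every coordinate i ∈ {1, …, d}, | E[ ( f(θ + δΔ) − f(θ − δΔ) ) / (2δ Δⁱ) ] − ∂f/∂θⁱ (θ) | ≤ C δ², where C is a constant depending only on d and B. In particular, the simultaneous-perturbation estimate of the i-th partial derivative has bias O(δ²). -/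
/-!
Taylor expansion to third order gives `f (θ + δΔ) - f (θ - δΔ) = 2δ f'(θ)Δ + O(Bδ³)`: the
second-order terms cancel. Since `Δⁱ = ±1`, the SPSA quotient is therefore `f'(θ)Δ · Δⁱ` up to
`Bδ²`, and `E[Δʲ Δⁱ]` is `1` for `j = i` and, by independence and `E[Δʲ] = 0`, `0` otherwise, so
`E[f'(θ)Δ · Δⁱ] = ∂ᵢ f(θ)`.
-/

open MeasureTheory ProbabilityTheory

section CentralDifference

variable {E F : Type*} [NormedAddCommGroup E] [NormedSpace ℝ E] [NormedAddCommGroup F]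
  [NormedSpace ℝ F] {f : E → F} {B : ℝ}

lemma norm_fderiv_fderiv_sub_le (hf : ContDiff ℝ 3 f)
    (hbd : ∀ x, ‖iteratedFDeriv ℝ 3 f x‖ ≤ B) (x y : E) :
    ‖fderiv ℝ (fderiv ℝ f) y - fderiv ℝ (fderiv ℝ f) x‖ ≤ B * ‖y - x‖ := by
  have hdiff : Differentiable ℝ (fderiv ℝ (fderiv ℝ f)) :=
    ((hf.fderiv_right (m := 2) (by norm_num)).fderiv_right (m := 1) (by norm_num)).differentiable
      one_ne_zero
  refine convex_univ.norm_image_sub_le_of_norm_fderiv_le (𝕜 := ℝ) (f := fderiv ℝ (fderiv ℝ f))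
    (fun z _ => hdiff z) (fun z _ => ?_) trivial trivial
  rw [← norm_iteratedFDeriv_zero (𝕜 := ℝ), norm_iteratedFDeriv_fderiv, norm_iteratedFDeriv_fderiv,
    norm_iteratedFDeriv_fderiv]
  exact hbd z

lemma norm_fderiv_add_sub_sub_le (hf : ContDiff ℝ 3 f)
    (hbd : ∀ x, ‖iteratedFDeriv ℝ 3 f x‖ ≤ B) (θ w : E) :
    ‖fderiv ℝ f (θ + w) - fderiv ℝ f θ - fderiv ℝ (fderiv ℝ f) θ w‖ ≤ B * ‖w‖ ^ 2 := by
  have hdiff : Differentiable ℝ (fderiv ℝ f) :=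
    (hf.fderiv_right (m := 2) (by norm_num)).differentiable two_ne_zero
  have h := (convex_closedBall θ ‖w‖).norm_image_sub_le_of_norm_hasFDerivWithin_le'
    (φ := fderiv ℝ (fderiv ℝ f) θ) (C := B * ‖w‖)
    (fun x _ => (hdiff x).hasFDerivAt.hasFDerivWithinAt) (fun x hx => ?_)
    (Metric.mem_closedBall_self (norm_nonneg w)) (y := θ + w) (by simp)
  · simpa [sq, mul_assoc] using h
  · refine (norm_fderiv_fderiv_sub_le hf hbd θ x).trans (mul_le_mul_of_nonneg_left ?_ ?_)
    · simpa [dist_eq_norm] using hx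
    · exact (norm_nonneg _).trans (hbd θ)

lemma norm_sub_sub_two_smul_fderiv_le (hf : ContDiff ℝ 3 f)
    (hbd : ∀ x, ‖iteratedFDeriv ℝ 3 f x‖ ≤ B) (θ v : E) :
    ‖f (θ + v) - f (θ - v) - (2 : ℝ) • fderiv ℝ f θ v‖ ≤ 2 * B * ‖v‖ ^ 3 := by
  have hdiff : Differentiable ℝ f := hf.differentiable (by norm_num)
  have hφ w : HasFDerivAt (fun w => f (θ + w) - f (θ - w) - (2 : ℝ) • fderiv ℝ f θ w)
      (fderiv ℝ f (θ + w) + fderiv ℝ f (θ - w) - (2 : ℝ) • fderiv ℝ f θ) w := by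
    have hplus := (hdiff (θ + w)).hasFDerivAt.comp w ((hasFDerivAt_id w).const_add θ)
    have hminus := (hdiff (θ - w)).hasFDerivAt.comp w ((hasFDerivAt_id w).const_sub θ)
    convert (hplus.sub hminus).sub ((fderiv ℝ f θ).hasFDerivAt.const_smul (2 : ℝ)) using 1
    all_goals ext; simp
  have hφ' w (hw : w ∈ Metric.closedBall (0 : E) ‖v‖) :
      ‖fderiv ℝ f (θ + w) + fderiv ℝ f (θ - w) - (2 : ℝ) • fderiv ℝ f θ‖ ≤ 2 * B * ‖v‖ ^ 2 := by
    have hw : ‖w‖ ≤ ‖v‖ := by simpa using hw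
    have hB : 0 ≤ B := (norm_nonneg _).trans (hbd θ)
    -- the `fderiv ℝ (fderiv ℝ f) θ (±w)` terms cancel
    have hsplit : fderiv ℝ f (θ + w) + fderiv ℝ f (θ - w) - (2 : ℝ) • fderiv ℝ f θ =
        (fderiv ℝ f (θ + w) - fderiv ℝ f θ - fderiv ℝ (fderiv ℝ f) θ w) +
          (fderiv ℝ f (θ + -w) - fderiv ℝ f θ - fderiv ℝ (fderiv ℝ f) θ (-w)) := by
      rw [map_neg, two_smul, ← sub_eq_add_neg]
      abel
    calc _ ≤ B * ‖w‖ ^ 2 + B * ‖-w‖ ^ 2 := hsplit ▸ (norm_add_le _ _).trans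
            (add_le_add (norm_fderiv_add_sub_sub_le hf hbd θ w)
              (norm_fderiv_add_sub_sub_le hf hbd θ (-w)))
      _ ≤ B * ‖v‖ ^ 2 + B * ‖v‖ ^ 2 := by rw [norm_neg]; gcongr
      _ = 2 * B * ‖v‖ ^ 2 := by ring
  have h := (convex_closedBall (0 : E) ‖v‖).norm_image_sub_le_of_norm_hasFDerivWithin_le
    (fun w _ => (hφ w).hasFDerivWithinAt) hφ' (Metric.mem_closedBall_self (norm_nonneg v))
    (y := v) (by simp)
  simpa [pow_succ, mul_assoc] using h

end CentralDifference

noncomputable def spsaGradient {ι : Type*} (f : (ι → ℝ) → ℝ) (θ : ι → ℝ) (δ : ℝ) (v : ι → ℝ)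
    (i : ι) : ℝ :=
  (f (θ + δ • v) - f (θ - δ • v)) / (2 * δ * v i)

lemma abs_spsaGradient_sub_fderiv_mul_le {ι : Type*} [Fintype ι] {f : (ι → ℝ) → ℝ} {B : ℝ}
    (hf : ContDiff ℝ 3 f) (hbd : ∀ x, ‖iteratedFDeriv ℝ 3 f x‖ ≤ B) (θ v : ι → ℝ)
    (hv : ∀ j, v j = 1 ∨ v j = -1) {δ : ℝ} (hδ : 0 < δ) (i : ι) :
    |spsaGradient f θ δ v i - fderiv ℝ f θ v * v i| ≤ B * δ ^ 2 := by
  have hvi : |v i| = 1 := by rcases hv i with h | h <;> simp [h]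
  have hnorm : ‖δ • v‖ ≤ δ := by
    rw [norm_smul, Real.norm_of_nonneg hδ.le]
    refine mul_le_of_le_one_right hδ.le ((pi_norm_le_iff_of_nonneg zero_le_one).2 fun j => ?_)
    rcases hv j with h | h <;> simp [h]
  have hrem := norm_sub_sub_two_smul_fderiv_le hf hbd θ (δ • v)
  have hsplit : spsaGradient f θ δ v i - fderiv ℝ f θ v * v i =
      (f (θ + δ • v) - f (θ - δ • v) - (2 : ℝ) • fderiv ℝ f θ (δ • v)) / (2 * δ * v i) := by
    rcases hv i with h | h <;> simp only [spsaGradient, h, map_smul, smul_eq_mul]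
    · field_simp
    · field_simp
      ring
  rw [hsplit, abs_div, abs_mul, abs_mul, hvi, abs_two, abs_of_pos hδ, mul_one,
    div_le_iff₀ (by positivity), ← Real.norm_eq_abs]
  calc _ ≤ 2 * B * ‖δ • v‖ ^ 3 := hrem
    _ ≤ 2 * B * δ ^ 3 := by have := (norm_nonneg _).trans (hbd θ); gcongr
    _ = B * δ ^ 2 * (2 * δ) := by ring

def IsRademacher {Ω : Type*} [MeasurableSpace Ω] (X : Ω → ℝ) (μ : Measure Ω) : Prop :=
  μ {ω | X ω = 1} = 1 / 2 ∧ μ {ω | X ω = -1} = 1 / 2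

namespace IsRademacher

variable {Ω : Type*} [MeasurableSpace Ω] {μ : Measure Ω} [IsProbabilityMeasure μ] {X : Ω → ℝ}

lemma ae_eq_one_or_eq_neg_one (hX : Measurable X) (hX' : IsRademacher X μ) :
    ∀ᵐ ω ∂μ, X ω = 1 ∨ X ω = -1 := by
  have hdisj : Disjoint {ω | X ω = 1} {ω | X ω = -1} :=
    Set.disjoint_left.2 fun ω h1 h2 => by norm_num [show X ω = 1 from h1] at h2
  refine (mem_ae_iff_prob_eq_one ((hX (measurableSet_singleton 1)).union
    (hX (measurableSet_singleton (-1))))).2 ?_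
  change μ ({ω | X ω = 1} ∪ {ω | X ω = -1}) = 1
  rw [measure_union hdisj (hX (measurableSet_singleton _)), hX'.1, hX'.2, ENNReal.add_halves]

lemma integral_eq_zero (hX : Measurable X) (hX' : IsRademacher X μ) : ∫ ω, X ω ∂μ = 0 := by
  have hA : MeasurableSet {ω | X ω = 1} := hX (measurableSet_singleton 1)
  have hX_eq : X =ᵐ[μ] fun ω => 2 * {ω | X ω = 1}.indicator 1 ω - 1 := by
    filter_upwards [hX'.ae_eq_one_or_eq_neg_one hX] with ω hω
    rcases hω with h | h <;> norm_num [Set.indicator, h]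
  rw [integral_congr_ae hX_eq, integral_sub ((integrable_indicator_iff hA).2
    (integrable_const 1).integrableOn |>.const_mul 2) (integrable_const 1), integral_const_mul,
    integral_indicator_one hA, measureReal_def, hX'.1]
  simp

lemma integral_mul_self (hX : Measurable X) (hX' : IsRademacher X μ) :
    ∫ ω, X ω * X ω ∂μ = 1 := by
  rw [integral_congr_ae (g := fun _ => 1) ?_, integral_const, probReal_univ, one_smul]
  filter_upwards [hX'.ae_eq_one_or_eq_neg_one hX] with ω hω
  rcases hω with h | h <;> simp [h]

end IsRademacher

section RademacherVector

variable {Ω ι : Type*} [MeasurableSpace Ω] {μ : Measure Ω} [IsProbabilityMeasure μ]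
  {Δ : Ω → ι → ℝ}

lemma integral_mul_eq_ite [DecidableEq ι] (hΔ : ∀ i, Measurable fun ω => Δ ω i)
    (hind : iIndepFun (fun i ω => Δ ω i) μ)
    (hΔ' : ∀ i, IsRademacher (fun ω => Δ ω i) μ) (i j : ι) :
    ∫ ω, Δ ω j * Δ ω i ∂μ = if j = i then 1 else 0 := by
  split_ifs with h
  · subst h
    exact (hΔ' j).integral_mul_self (hΔ j)
  · rw [(hind.indepFun h).integral_fun_mul_eq_mul_integral (hΔ j).aestronglyMeasurable
      (hΔ i).aestronglyMeasurable, (hΔ' j).integral_eq_zero (hΔ j), zero_mul]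

lemma integrable_mul_of_isRademacher (hΔ : ∀ i, Measurable fun ω => Δ ω i)
    (hΔ' : ∀ i, IsRademacher (fun ω => Δ ω i) μ) (i j : ι) :
    Integrable (fun ω => Δ ω j * Δ ω i) μ := by
  refine .of_bound ((hΔ j).mul (hΔ i)).aestronglyMeasurable 1 ?_
  filter_upwards [(hΔ' j).ae_eq_one_or_eq_neg_one (hΔ j),
    (hΔ' i).ae_eq_one_or_eq_neg_one (hΔ i)] with ω hj hi
  rcases hj with hj | hj <;> rcases hi with hi | hi <;> simp [hj, hi]

lemma clm_apply_mul_eq_sum [Fintype ι] [DecidableEq ι] (L : (ι → ℝ) →L[ℝ] ℝ) (x : ι → ℝ)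
    (i : ι) : L x * x i = ∑ j, L (Pi.single j 1) * (x j * x i) := by
  conv_lhs => arg 1; rw [pi_eq_sum_univ' x]
  simp only [map_sum, map_smul, smul_eq_mul, Finset.sum_mul]
  exact Finset.sum_congr rfl fun j _ => by ring

lemma integrable_clm_apply_mul [Fintype ι] [DecidableEq ι]
    (hΔ : ∀ i, Measurable fun ω => Δ ω i)
    (hΔ' : ∀ i, IsRademacher (fun ω => Δ ω i) μ)
    (L : (ι → ℝ) →L[ℝ] ℝ) (i : ι) : Integrable (fun ω => L (Δ ω) * Δ ω i) μ := by
  simp_rw [clm_apply_mul_eq_sum L]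
  exact integrable_finsetSum _ fun j _ => (integrable_mul_of_isRademacher hΔ hΔ' i j).const_mul _

lemma integral_clm_apply_mul_eq [Fintype ι] [DecidableEq ι]
    (hΔ : ∀ i, Measurable fun ω => Δ ω i)
    (hind : iIndepFun (fun i ω => Δ ω i) μ)
    (hΔ' : ∀ i, IsRademacher (fun ω => Δ ω i) μ)
    (L : (ι → ℝ) →L[ℝ] ℝ) (i : ι) :
    ∫ ω, L (Δ ω) * Δ ω i ∂μ = L (Pi.single i 1) := by
  simp_rw [clm_apply_mul_eq_sum L]
  rw [integral_finsetSum _ fun j _ => (integrable_mul_of_isRademacher hΔ hΔ' i j).const_mul _]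
  simp_rw [integral_const_mul, integral_mul_eq_ite hΔ hind hΔ', mul_ite, mul_one, mul_zero,
    Finset.sum_ite_eq', Finset.mem_univ, if_true]

end RademacherVector

lemma abs_integral_sub_le_of_ae_abs_sub_le {Ω : Type*} [MeasurableSpace Ω] {μ : Measure Ω}
    [IsProbabilityMeasure μ] {g h : Ω → ℝ} {c : ℝ} (hg : Integrable g μ)
    (hh : AEStronglyMeasurable h μ) (hc : ∀ᵐ ω ∂μ, |h ω - g ω| ≤ c) :
    |∫ ω, h ω ∂μ - ∫ ω, g ω ∂μ| ≤ c := by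
  have hdiff : Integrable (h - g) μ := .of_bound (hh.sub hg.aestronglyMeasurable) c hc
  rw [← integral_sub (by simpa using hdiff.add hg) hg, ← Real.norm_eq_abs]
  simpa using norm_integral_le_of_norm_le_const (f := fun ω => h ω - g ω) (μ := μ)
    (by simpa only [Real.norm_eq_abs] using hc)

theorem spsa_gradient_estimate_bias_general (d : ℕ) (B : ℝ) :
    ∃ C : ℝ, ∀ (Ω : Type) (_ : MeasurableSpace Ω) (μ : Measure Ω),
      IsProbabilityMeasure μ →
      ∀ f : (Fin d → ℝ) → ℝ, ContDiff ℝ 3 f →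
      (∀ θ : Fin d → ℝ, ‖iteratedFDeriv ℝ 3 f θ‖ ≤ B) →
      ∀ Δ : Ω → Fin d → ℝ, (∀ i, Measurable fun ω => Δ ω i) →
      ProbabilityTheory.iIndepFun
        (fun i ω => Δ ω i) μ →
      (∀ i, μ {ω | Δ ω i = 1} = 1 / 2 ∧ μ {ω | Δ ω i = -1} = 1 / 2) →
      ∀ (θ : Fin d → ℝ) (δ : ℝ), 0 < δ → ∀ i : Fin d,
        |(∫ ω, (f (θ + δ • Δ ω) - f (θ - δ • Δ ω)) / (2 * δ * Δ ω i) ∂μ)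
            - fderiv ℝ f θ (Pi.single i 1)|
          ≤ C * δ ^ 2 := by
  refine ⟨B, fun Ω _ μ _ f hf hbd Δ hΔ hind hΔ' θ δ hδ i => ?_⟩
  have hpm : ∀ᵐ ω ∂μ, ∀ j, Δ ω j = 1 ∨ Δ ω j = -1 :=
    ae_all_iff.2 fun j => IsRademacher.ae_eq_one_or_eq_neg_one (hΔ j) (hΔ' j)
  have hmeas : Measurable fun ω => spsaGradient f θ δ (Δ ω) i := by
    have hfm := hf.continuous.measurable
    have hΔm := measurable_pi_lambda _ hΔ
    unfold spsaGradient
    fun_prop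
  rw [← integral_clm_apply_mul_eq hΔ hind hΔ' (fderiv ℝ f θ) i]
  refine abs_integral_sub_le_of_ae_abs_sub_le (integrable_clm_apply_mul hΔ hΔ' _ i)
    hmeas.aestronglyMeasurable ?_
  filter_upwards [hpm] with ω hω
  exact abs_spsaGradient_sub_fderiv_mul_le hf hbd θ (Δ ω) hω hδ i

/-- for a `C³` function `f : ℝ^d → ℝ` with third derivatives bounded
by `B`, the SPSA finite-difference estimator with i.i.d. Rademacher perturbations
has bias at most `C δ²` in each coordinate, where `C` depends only on `d` and `B`. -/
theorem spsa_gradient_estimate_bias (d : ℕ) (B : ℝ) (hB : 0 ≤ B) :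
    ∃ C : ℝ, ∀ (Ω : Type) (_ : MeasurableSpace Ω) (μ : Measure Ω),
      IsProbabilityMeasure μ →
      ∀ f : (Fin d → ℝ) → ℝ, ContDiff ℝ 3 f →
      (∀ θ : Fin d → ℝ, ‖iteratedFDeriv ℝ 3 f θ‖ ≤ B) →
      ∀ Δ : Ω → Fin d → ℝ, (∀ i, Measurable fun ω => Δ ω i) →
      ProbabilityTheory.iIndepFun
        (fun i ω => Δ ω i) μ →
      (∀ i, μ {ω | Δ ω i = 1} = 1 / 2 ∧ μ {ω | Δ ω i = -1} = 1 / 2) →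
      ∀ (θ : Fin d → ℝ) (δ : ℝ), 0 < δ → ∀ i : Fin d,
        |(∫ ω, (f (θ + δ • Δ ω) - f (θ - δ • Δ ω)) / (2 * δ * Δ ω i) ∂μ)
            - fderiv ℝ f θ (Pi.single i 1)|
          ≤ C * δ ^ 2 :=
  spsa_gradient_estimate_bias_general d B
end
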